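/- arXiv:1712.08839 — 5 statements merged into one kernel-verified Lean document; each statement's English description precedes it below -/
import Mathlib

section
/- Let γ be a smooth unit-speed space curve with κ(t₀) > 0 and let w be a nonzero vector. Set H(t) = ⟨γ'(t), w⟩ (the height function of the tangent indicatrix along w). Then H'(t₀) = H''(t₀) = H'''(t₀) = 0 if and only if w = λ₁T(t₀) + λ₂B(t₀) with κ(t₀)λ₁ = τ(t₀)λ₂ and κ(t₀)τ'(t₀) − κ'(t₀)τ(t₀) = 0. -/
noncomputable section
open scoped RealInnerProductSpace
open Filter Asymptotics

/-- ℝ³ as a Euclidean space. -/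
abbrev E3 := EuclideanSpace ℝ (Fin 3)

/-- The point (x,y,z) of ℝ³. -/
def mk3 (x y z : ℝ) : E3 := (WithLp.equiv 2 (Fin 3 → ℝ)).symm ![x, y, z]

/-- Cross product on ℝ³. -/
def cross3 (u v : E3) : E3 :=
  mk3 (u 1 * v 2 - u 2 * v 1) (u 2 * v 0 - u 0 * v 2) (u 0 * v 1 - u 1 * v 0)

/-- Determinant of three vectors of ℝ³ (scalar triple product). -/
def det3 (u v w : E3) : ℝ :=
  u 0 * (v 1 * w 2 - v 2 * w 1) - u 1 * (v 0 * w 2 - v 2 * w 0) +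
    u 2 * (v 0 * w 1 - v 1 * w 0)

lemma inner3 (u v : E3) : ⟪u,v⟫ = u 0 * v 0 + u 1 * v 1 + u 2 * v 2 := by
  simp [PiLp.inner_apply, Fin.sum_univ_three, RCLike.inner_apply]; ring

lemma mk30 (x y z : ℝ) : mk3 x y z 0 = x := rfl
lemma mk31 (x y z : ℝ) : mk3 x y z 1 = y := rfl
lemma mk32 (x y z : ℝ) : mk3 x y z 2 = z := rfl

lemma cross_inner_left (u v : E3) : ⟪u, cross3 u v⟫ = 0 := by
  simp only [inner3, cross3, mk30, mk31, mk32]; ring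

lemma cross_inner_right (u v : E3) : ⟪v, cross3 u v⟫ = 0 := by
  simp only [inner3, cross3, mk30, mk31, mk32]; ring

lemma cross_norm (u v : E3) : ⟪cross3 u v, cross3 u v⟫ = ⟪u,u⟫*⟪v,v⟫ - ⟪u,v⟫^2 := by
  simp only [inner3, cross3, mk30, mk31, mk32]; ring

lemma orthonormal3_decomp (T N B w : E3) (hTT : ⟪T,T⟫=1) (hNN : ⟪N,N⟫=1) (hBB : ⟪B,B⟫=1)
    (hTN : ⟪T,N⟫=0) (hTB : ⟪T,B⟫=0) (hNB : ⟪N,B⟫=0) :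
    w = ⟪T,w⟫ • T + ⟪N,w⟫ • N + ⟪B,w⟫ • B := by
  have hNT : ⟪N,T⟫ = 0 := by rw [real_inner_comm]; exact hTN
  have hBT : ⟪B,T⟫ = 0 := by rw [real_inner_comm]; exact hTB
  have hBN : ⟪B,N⟫ = 0 := by rw [real_inner_comm]; exact hNB
  set f : Fin 3 → E3 := ![T, N, B] with hf
  have horth : Orthonormal ℝ f := by
    rw [orthonormal_iff_ite]
    intro i j
    fin_cases i <;> fin_cases j <;>
      simp only [hf, Fin.zero_eta, Fin.mk_one, Fin.reduceFinMk, Matrix.cons_val_zero,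
        Matrix.cons_val_one, Matrix.head_cons, Matrix.cons_val_two, Matrix.tail_cons,
        Fin.reduceEq, if_true, if_false, reduceIte] <;>
      first
        | exact hTT | exact hNN | exact hBB | exact hTN | exact hTB | exact hNB
        | exact hNT | exact hBT | exact hBN
  have hspan : Submodule.span ℝ (Set.range f) = ⊤ :=
    horth.linearIndependent.span_eq_top_of_card_eq_finrank (by simp)
  set v := w - (⟪T,w⟫ • T + ⟪N,w⟫ • N + ⟪B,w⟫ • B) with hvdef
  have hv : ∀ i, ⟪v, f i⟫ = 0 := by
    intro i
    fin_cases i <;>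
      simp only [hf, Fin.zero_eta, Fin.mk_one, Fin.reduceFinMk, Matrix.cons_val_zero,
        Matrix.cons_val_one, Matrix.head_cons, Matrix.cons_val_two, Matrix.tail_cons,
        hvdef, inner_sub_left, inner_add_left, real_inner_smul_left,
        hTT, hNN, hBB, hTN, hTB, hNB, hNT, hBT, hBN,
        mul_one, mul_zero, add_zero, zero_add] <;>
      linarith [real_inner_comm w T, real_inner_comm w N, real_inner_comm w B]
  have hker : Submodule.span ℝ (Set.range f) ≤ LinearMap.ker (innerSL ℝ v).toLinearMap := by
    rw [Submodule.span_le]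
    rintro x ⟨i, rfl⟩
    simpa [LinearMap.mem_ker] using hv i
  have h2 : ⟪v,v⟫ = 0 := LinearMap.mem_ker.mp (hker (hspan ▸ Submodule.mem_top))
  exact sub_eq_zero.mp (inner_self_eq_zero.mp h2)

/-- For a smooth unit-speed curve with κ(t₀) > 0 and w ≠ 0, the height
function H(t) = ⟨γ'(t), w⟩ of the tangent indicatrix satisfies
H'(t₀) = H''(t₀) = H'''(t₀) = 0 iff w = λ₁T(t₀) + λ₂B(t₀) with κ(t₀)λ₁ = τ(t₀)λ₂ and
κ(t₀)τ'(t₀) − κ'(t₀)τ(t₀) = 0. -/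
theorem tangent_indicatrix_height_A3_iff_twisting
    (γ T N B : ℝ → E3) (κ τ : ℝ → ℝ) (t₀ : ℝ) (w : E3) (hw : w ≠ 0)
    (hγ : ContDiff ℝ (⊤ : ℕ∞) γ) (hTs : ContDiff ℝ (⊤ : ℕ∞) T) (hNs : ContDiff ℝ (⊤ : ℕ∞) N)
    (hBs : ContDiff ℝ (⊤ : ℕ∞) B) (hκs : ContDiff ℝ (⊤ : ℕ∞) κ) (hτs : ContDiff ℝ (⊤ : ℕ∞) τ)
    (hTdef : ∀ t, T t = deriv γ t)
    (hunit : ∀ t, ‖T t‖ = 1) (hNunit : ∀ t, ‖N t‖ = 1)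
    (hBdef : ∀ t, B t = cross3 (T t) (N t))
    (hTN : ∀ t, ⟪T t, N t⟫ = 0)
    (hκpos : 0 < κ t₀)
    (hFr1 : ∀ t, deriv T t = κ t • N t)
    (hFr2 : ∀ t, deriv N t = (-(κ t)) • T t + τ t • B t)
    (hFr3 : ∀ t, deriv B t = (-(τ t)) • N t) :
    ((deriv (fun t => ⟪deriv γ t, w⟫) t₀ = 0 ∧
        iteratedDeriv 2 (fun t => ⟪deriv γ t, w⟫) t₀ = 0) ∧
      iteratedDeriv 3 (fun t => ⟪deriv γ t, w⟫) t₀ = 0) ↔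
    ((∃ l₁ l₂ : ℝ, w = l₁ • T t₀ + l₂ • B t₀ ∧ κ t₀ * l₁ = τ t₀ * l₂) ∧
      κ t₀ * deriv τ t₀ - deriv κ t₀ * τ t₀ = 0) := by
  have hk : κ t₀ ≠ 0 := ne_of_gt hκpos
  -- rewrite the height function in terms of T
  have hH : (fun t => ⟪deriv γ t, w⟫) = fun t => ⟪T t, w⟫ := by
    funext t; rw [hTdef]
  rw [hH]
  -- derivatives of the coordinate functions
  have ha : ∀ t, HasDerivAt (fun s => ⟪T s, w⟫) (κ t * ⟪N t, w⟫) t := by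
    intro t
    have h := HasDerivAt.inner ℝ ((hTs.differentiable (by simp) t).hasDerivAt)
      (hasDerivAt_const t w)
    simpa only [hFr1 t, real_inner_smul_left, inner_zero_right, zero_add] using h
  have hb : ∀ t, HasDerivAt (fun s => ⟪N s, w⟫)
      (-(κ t) * ⟪T t, w⟫ + τ t * ⟪B t, w⟫) t := by
    intro t
    have h := HasDerivAt.inner ℝ ((hNs.differentiable (by simp) t).hasDerivAt)
      (hasDerivAt_const t w)
    simpa only [hFr2 t, inner_add_left, real_inner_smul_left, inner_zero_right, zero_add, neg_mul] using h
  have hc : ∀ t, HasDerivAt (fun s => ⟪B s, w⟫) (-(τ t) * ⟪N t, w⟫) t := by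
    intro t
    have h := HasDerivAt.inner ℝ ((hBs.differentiable (by simp) t).hasDerivAt)
      (hasDerivAt_const t w)
    simpa only [hFr3 t, real_inner_smul_left, inner_zero_right, zero_add, neg_mul] using h
  have hκd : Differentiable ℝ κ := hκs.differentiable (by simp)
  have hτd : Differentiable ℝ τ := hτs.differentiable (by simp)
  have hκ'd : Differentiable ℝ (deriv κ) :=
    (contDiff_infty_iff_deriv.mp (hκs.of_le (by simp))).2.differentiable (by simp)
  -- first derivative as a function
  have hD1 : deriv (fun t => ⟪T t, w⟫) = fun t => κ t * ⟪N t, w⟫ :=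
    funext fun t => (ha t).deriv
  -- second derivative as a function
  have hD2 : deriv (fun t => κ t * ⟪N t, w⟫) =
      fun t => deriv κ t * ⟪N t, w⟫ + κ t * (-(κ t) * ⟪T t, w⟫ + τ t * ⟪B t, w⟫) :=
    funext fun t => ((hκd t).hasDerivAt.mul (hb t)).deriv
  -- third derivative at t₀
  have h3d : HasDerivAt
      (fun t => deriv κ t * ⟪N t, w⟫ + κ t * (-(κ t) * ⟪T t, w⟫ + τ t * ⟪B t, w⟫))
      ((deriv (deriv κ) t₀ * ⟪N t₀, w⟫ +
          deriv κ t₀ * (-(κ t₀) * ⟪T t₀, w⟫ + τ t₀ * ⟪B t₀, w⟫)) +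
        (deriv κ t₀ * (-(κ t₀) * ⟪T t₀, w⟫ + τ t₀ * ⟪B t₀, w⟫) +
          κ t₀ * ((-(deriv κ t₀) * ⟪T t₀, w⟫ + -(κ t₀) * (κ t₀ * ⟪N t₀, w⟫)) +
            (deriv τ t₀ * ⟪B t₀, w⟫ + τ t₀ * (-(τ t₀) * ⟪N t₀, w⟫))))) t₀ :=
    ((hκ'd t₀).hasDerivAt.mul (hb t₀)).add
      ((hκd t₀).hasDerivAt.mul
        ((((hκd t₀).hasDerivAt.neg.mul (ha t₀)).add ((hτd t₀).hasDerivAt.mul (hc t₀)))))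
  have i2 : iteratedDeriv 2 (fun t => ⟪T t, w⟫) = deriv (deriv (fun t => ⟪T t, w⟫)) := by
    rw [iteratedDeriv_succ, iteratedDeriv_one]
  have i3 : iteratedDeriv 3 (fun t => ⟪T t, w⟫) =
      deriv (iteratedDeriv 2 (fun t => ⟪T t, w⟫)) := iteratedDeriv_succ
  have e1 : deriv (fun t => ⟪T t, w⟫) t₀ = κ t₀ * ⟪N t₀, w⟫ := by rw [hD1]
  have e2 : iteratedDeriv 2 (fun t => ⟪T t, w⟫) t₀ =
      deriv κ t₀ * ⟪N t₀, w⟫ + κ t₀ * (-(κ t₀) * ⟪T t₀, w⟫ + τ t₀ * ⟪B t₀, w⟫) := by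
    rw [i2, hD1, hD2]
  have e3 : iteratedDeriv 3 (fun t => ⟪T t, w⟫) t₀ =
      ((deriv (deriv κ) t₀ * ⟪N t₀, w⟫ +
          deriv κ t₀ * (-(κ t₀) * ⟪T t₀, w⟫ + τ t₀ * ⟪B t₀, w⟫)) +
        (deriv κ t₀ * (-(κ t₀) * ⟪T t₀, w⟫ + τ t₀ * ⟪B t₀, w⟫) +
          κ t₀ * ((-(deriv κ t₀) * ⟪T t₀, w⟫ + -(κ t₀) * (κ t₀ * ⟪N t₀, w⟫)) +
            (deriv τ t₀ * ⟪B t₀, w⟫ + τ t₀ * (-(τ t₀) * ⟪N t₀, w⟫))))) := by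
    rw [i3, i2, hD1, hD2, h3d.deriv]
  rw [e1, e2, e3]
  -- orthonormality at t₀
  have hTT : ⟪T t₀, T t₀⟫ = 1 := by
    rw [real_inner_self_eq_norm_sq, hunit]; norm_num
  have hNN : ⟪N t₀, N t₀⟫ = 1 := by
    rw [real_inner_self_eq_norm_sq, hNunit]; norm_num
  have hTB : ⟪T t₀, B t₀⟫ = 0 := by rw [hBdef]; exact cross_inner_left _ _
  have hNB : ⟪N t₀, B t₀⟫ = 0 := by rw [hBdef]; exact cross_inner_right _ _
  have hBB : ⟪B t₀, B t₀⟫ = 1 := by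
    rw [hBdef, cross_norm, hTT, hNN, hTN t₀]; norm_num
  set a := ⟪T t₀, w⟫ with hadef
  set b := ⟪N t₀, w⟫ with hbdef
  set c := ⟪B t₀, w⟫ with hcdef
  have hdecomp : w = a • T t₀ + b • N t₀ + c • B t₀ :=
    orthonormal3_decomp (T t₀) (N t₀) (B t₀) w hTT hNN hBB (hTN t₀) hTB hNB
  constructor
  · rintro ⟨⟨h1, h2⟩, h3⟩
    have hb0 : b = 0 := (mul_eq_zero.mp h1).resolve_left hk
    rw [hb0] at h2 h3
    have hax : -(κ t₀) * a + τ t₀ * c = 0 := by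
      have hmul : κ t₀ * (-(κ t₀) * a + τ t₀ * c) = 0 := by linarith
      exact (mul_eq_zero.mp hmul).resolve_left hk
    have h2' : κ t₀ * a = τ t₀ * c := by linarith
    have h3' : deriv κ t₀ * a = deriv τ t₀ * c := by
      have hX : κ t₀ * (deriv τ t₀ * c - deriv κ t₀ * a) = 0 := by
        linear_combination h3 - 2 * (deriv κ t₀) * hax
      have := (mul_eq_zero.mp hX).resolve_left hk
      linarith
    refine ⟨⟨a, c, ?_, h2'⟩, ?_⟩
    · rw [hdecomp, hb0, zero_smul, add_zero]
    · by_cases hc0 : c = 0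
      · exfalso
        have ha0 : a = 0 := by
          have : κ t₀ * a = 0 := by rw [h2', hc0, mul_zero]
          exact (mul_eq_zero.mp this).resolve_left hk
        apply hw
        rw [hdecomp, ha0, hb0, hc0, zero_smul, zero_smul, zero_smul, add_zero, add_zero]
      · apply mul_right_cancel₀ hc0
        rw [zero_mul]
        linear_combination (deriv κ t₀) * h2' - κ t₀ * h3'
  · rintro ⟨⟨l₁, l₂, hwl, hkl⟩, htw⟩
    have hNT : ⟪N t₀, T t₀⟫ = 0 := by rw [real_inner_comm]; exact hTN t₀
    have hBT : ⟪B t₀, T t₀⟫ = 0 := by rw [real_inner_comm]; exact hTB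
    have hBN : ⟪B t₀, N t₀⟫ = 0 := by rw [real_inner_comm]; exact hNB
    have hb0 : b = 0 := by
      rw [hbdef, hwl]
      simp only [inner_add_right, real_inner_smul_right, hNT, hNB, mul_zero, add_zero]
    have ha1 : a = l₁ := by
      rw [hadef, hwl]
      simp only [inner_add_right, real_inner_smul_right, hTT, hTB, mul_one, mul_zero, add_zero]
    have hc1 : c = l₂ := by
      rw [hcdef, hwl]
      simp only [inner_add_right, real_inner_smul_right, hBT, hBB, mul_one, mul_zero, zero_add]
    have h5 : deriv τ t₀ * l₂ = deriv κ t₀ * l₁ := by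
      apply mul_left_cancel₀ hk
      linear_combination l₂ * htw - (deriv κ t₀) * hkl
    refine ⟨⟨?_, ?_⟩, ?_⟩
    · rw [hb0, mul_zero]
    · rw [hb0, ha1, hc1]
      linear_combination (-(κ t₀)) * hkl
    · rw [hb0, ha1, hc1]
      linear_combination (-2 * deriv κ t₀) * hkl + κ t₀ * h5
end
end

section
/- Let γ be a smooth unit-speed space curve with κ > 0 and τ ≠ 0 near t₀, and c_γ(t) = γ(t) + (1/κ)N − (κ'/(κ²τ))B its generalized evolute. Then c_γ'(t₀) = 0 if and only if μ₂'(t₀) + μ₁(t₀)τ(t₀) = 0, where μ₁ = 1/κ, μ₂ = −κ'/(κ²τ). In particular, c_γ'(t₀) = (μ₂'(t₀) + μ₁(t₀)τ(t₀)) B(t₀). -/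
noncomputable section
open scoped RealInnerProductSpace
open Filter Asymptotics

/-- Lagrange identity for `cross3`. -/
lemma cross3_lagrange (u v : E3) :
    ⟪cross3 u v, cross3 u v⟫ = ⟪u,u⟫ * ⟪v,v⟫ - ⟪u,v⟫^2 := by
  simp only [PiLp.inner_apply]
  simp [cross3, mk3, PiLp.inner_apply, RCLike.inner_apply, Fin.sum_univ_three]
  ring

/-- For a smooth unit-speed curve with κ > 0 and τ ≠ 0 near t₀, the
generalized evolute c_γ = γ + μ₁N + μ₂B (μ₁ = 1/κ, μ₂ = −κ'/(κ²τ)) satisfies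
c_γ'(t₀) = (μ₂'(t₀) + μ₁(t₀)τ(t₀))B(t₀); in particular c_γ'(t₀) = 0 iff
μ₂'(t₀) + μ₁(t₀)τ(t₀) = 0. -/
theorem evolute_derivative_along_binormal
    (γ T N B c : ℝ → E3) (κ τ : ℝ → ℝ) (t₀ : ℝ)
    (hγ : ContDiff ℝ (⊤ : ℕ∞) γ) (hTs : ContDiff ℝ (⊤ : ℕ∞) T) (hNs : ContDiff ℝ (⊤ : ℕ∞) N)
    (hBs : ContDiff ℝ (⊤ : ℕ∞) B) (hκs : ContDiff ℝ (⊤ : ℕ∞) κ) (hτs : ContDiff ℝ (⊤ : ℕ∞) τ)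
    (hTdef : ∀ t, T t = deriv γ t)
    (hunit : ∀ t, ‖T t‖ = 1) (hNunit : ∀ t, ‖N t‖ = 1)
    (hBdef : ∀ t, B t = cross3 (T t) (N t))
    (hTN : ∀ t, ⟪T t, N t⟫ = 0)
    (hκτ : ∀ᶠ t in nhds t₀, 0 < κ t ∧ τ t ≠ 0)
    (hFr1 : ∀ t, deriv T t = κ t • N t)
    (hFr2 : ∀ t, deriv N t = (-(κ t)) • T t + τ t • B t)
    (hFr3 : ∀ t, deriv B t = (-(τ t)) • N t)
    (hc : ∀ t, c t = γ t + (1 / κ t) • N t + (-(deriv κ t) / (κ t ^ 2 * τ t)) • B t) :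
    deriv c t₀ =
      (deriv (fun t => -(deriv κ t) / (κ t ^ 2 * τ t)) t₀ + (1 / κ t₀) * τ t₀) • B t₀ ∧
    (deriv c t₀ = 0 ↔
      deriv (fun t => -(deriv κ t) / (κ t ^ 2 * τ t)) t₀ + (1 / κ t₀) * τ t₀ = 0) := by

  obtain ⟨hκ0, hτ0⟩ := hκτ.self_of_nhds
  have hκne : κ t₀ ≠ 0 := ne_of_gt hκ0
  have hκ' : ContDiff ℝ (⊤ : ℕ∞) (deriv κ) :=
    (contDiff_infty_iff_deriv.mp (hκs.of_le (by simp))).2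
  have hγd : HasDerivAt γ (T t₀) t₀ := by
    rw [hTdef]; exact (hγ.differentiable (by simp) t₀).hasDerivAt
  have hNd : HasDerivAt N (deriv N t₀) t₀ := (hNs.differentiable (by simp) t₀).hasDerivAt
  have hBd : HasDerivAt B (deriv B t₀) t₀ := (hBs.differentiable (by simp) t₀).hasDerivAt
  have hκd : HasDerivAt κ (deriv κ t₀) t₀ := (hκs.differentiable (by simp) t₀).hasDerivAt
  have hμ₁d : HasDerivAt (fun t => 1 / κ t)
      ((0 * κ t₀ - 1 * deriv κ t₀) / κ t₀ ^ 2) t₀ :=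
    (hasDerivAt_const t₀ (1:ℝ)).div hκd hκne
  have hden : (fun t => κ t ^ 2 * τ t) t₀ ≠ 0 := by
    simp only
    exact mul_ne_zero (pow_ne_zero 2 hκne) hτ0
  have hμ₂diff : DifferentiableAt ℝ (fun t => -(deriv κ t) / (κ t ^ 2 * τ t)) t₀ := by
    exact DifferentiableAt.div ((hκ'.differentiable (by simp) t₀).neg)
      (((hκs.differentiable (by simp) t₀).pow 2).mul (hτs.differentiable (by simp) t₀)) hden
  set m₂ := deriv (fun t => -(deriv κ t) / (κ t ^ 2 * τ t)) t₀ with hm₂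
  have hμ₂d : HasDerivAt (fun t => -(deriv κ t) / (κ t ^ 2 * τ t)) m₂ t₀ :=
    hμ₂diff.hasDerivAt
  have hcfun : c = fun t => γ t + (1 / κ t) • N t +
      (-(deriv κ t) / (κ t ^ 2 * τ t)) • B t := funext hc
  have hcd : HasDerivAt c
      (T t₀ + ((1 / κ t₀) • deriv N t₀ + ((0 * κ t₀ - 1 * deriv κ t₀) / κ t₀ ^ 2) • N t₀)
        + ((-(deriv κ t₀) / (κ t₀ ^ 2 * τ t₀)) • deriv B t₀ + m₂ • B t₀)) t₀ := by
    rw [hcfun]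
    exact (hγd.add (hμ₁d.smul hNd)).add (hμ₂d.smul hBd)
  have hderiv : deriv c t₀ = (m₂ + (1 / κ t₀) * τ t₀) • B t₀ := by
    rw [hcd.deriv, hFr2, hFr3]
    match_scalars <;> field_simp [hκne, hτ0] <;> ring
  refine ⟨hderiv, ?_⟩
  have hBne : B t₀ ≠ 0 := by
    intro h
    have hB1 : ⟪B t₀, B t₀⟫ = 1 := by
      rw [hBdef, cross3_lagrange, real_inner_self_eq_norm_sq, real_inner_self_eq_norm_sq,
        hunit, hNunit, hTN]
      norm_num
    rw [h] at hB1
    simp at hB1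
  rw [hderiv]
  constructor
  · intro h
    rcases smul_eq_zero.mp h with h' | h'
    · exact h'
    · exact absurd h' hBne
  · intro h; rw [h, zero_smul]
end
end

section
/- Let γ be a smooth unit-speed space curve with κ(t₀) > 0, τ(t₀) ≠ 0. Then γ has a vertex at t₀ (i.e. the generalized evolute c_γ = γ + (1/κ)N − (κ'/(κ²τ))B satisfies c_γ'(t₀) = 0) if and only if κ''(t₀) = 2κ'(t₀)²/κ(t₀) + κ'(t₀)τ'(t₀)/τ(t₀) + κ(t₀)τ(t₀)². -/
noncomputable section
open scoped RealInnerProductSpace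
open Filter Asymptotics

/-- A smooth unit-speed curve with κ(t₀) > 0, τ(t₀) ≠ 0 has a vertex at t₀
(c_γ'(t₀) = 0 for the generalized evolute) iff
κ''(t₀) = 2κ'(t₀)²/κ(t₀) + κ'(t₀)τ'(t₀)/τ(t₀) + κ(t₀)τ(t₀)². -/
theorem vertex_iff_curvature_torsion_relation
    (γ T N B c : ℝ → E3) (κ τ : ℝ → ℝ) (t₀ : ℝ)
    (hγ : ContDiff ℝ (⊤ : ℕ∞) γ) (hTs : ContDiff ℝ (⊤ : ℕ∞) T) (hNs : ContDiff ℝ (⊤ : ℕ∞) N)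
    (hBs : ContDiff ℝ (⊤ : ℕ∞) B) (hκs : ContDiff ℝ (⊤ : ℕ∞) κ) (hτs : ContDiff ℝ (⊤ : ℕ∞) τ)
    (hTdef : ∀ t, T t = deriv γ t)
    (hunit : ∀ t, ‖T t‖ = 1) (hNunit : ∀ t, ‖N t‖ = 1)
    (hBdef : ∀ t, B t = cross3 (T t) (N t))
    (hTN : ∀ t, ⟪T t, N t⟫ = 0)
    (hκτ : ∀ᶠ t in nhds t₀, 0 < κ t ∧ τ t ≠ 0)
    (hFr1 : ∀ t, deriv T t = κ t • N t)
    (hFr2 : ∀ t, deriv N t = (-(κ t)) • T t + τ t • B t)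
    (hFr3 : ∀ t, deriv B t = (-(τ t)) • N t)
    (hc : ∀ t, c t = γ t + (1 / κ t) • N t - (deriv κ t / (κ t ^ 2 * τ t)) • B t) :
    deriv c t₀ = 0 ↔
      iteratedDeriv 2 κ t₀ =
        2 * (deriv κ t₀) ^ 2 / κ t₀ + deriv κ t₀ * deriv τ t₀ / τ t₀ +
          κ t₀ * τ t₀ ^ 2 := by
  obtain ⟨hk0, ht0⟩ := hκτ.self_of_nhds
  have hk0' : κ t₀ ≠ 0 := ne_of_gt hk0
  have hκd : Differentiable ℝ κ := hκs.differentiable (by simp)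
  have hκ'd : Differentiable ℝ (deriv κ) := by
    have h1 : ContDiff ℝ (↑(⊤ : ℕ∞)) κ := hκs.of_le (by simp)
    exact (contDiff_infty_iff_deriv.mp h1).2.differentiable (by simp)
  have hτd : Differentiable ℝ τ := hτs.differentiable (by simp)
  have hden : κ t₀ ^ 2 * τ t₀ ≠ 0 := mul_ne_zero (pow_ne_zero 2 hk0') ht0
  set k := κ t₀ with hkdef
  set k' := deriv κ t₀ with hk'def
  set k'' := deriv (deriv κ) t₀ with hk''def
  set b := τ t₀ with hbdef
  set b' := deriv τ t₀ with hb'def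
  have hκh : HasDerivAt κ k' t₀ := (hκd t₀).hasDerivAt
  have hκ'h : HasDerivAt (deriv κ) k'' t₀ := (hκ'd t₀).hasDerivAt
  have hτh : HasDerivAt τ b' t₀ := (hτd t₀).hasDerivAt
  have hNh : HasDerivAt N (deriv N t₀) t₀ := ((hNs.differentiable (by simp)) t₀).hasDerivAt
  have hBh : HasDerivAt B (deriv B t₀) t₀ := ((hBs.differentiable (by simp)) t₀).hasDerivAt
  have hγh : HasDerivAt γ (T t₀) t₀ := by
    rw [hTdef]; exact ((hγ.differentiable (by simp)) t₀).hasDerivAt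
  have hf : HasDerivAt (fun t => 1 / κ t) (-k' / k ^ 2) t₀ := by
    have := hκh.inv hk0'
    rw [show (κ⁻¹ : ℝ → ℝ) = fun t => 1 / κ t from by funext t; simp] at this
    exact this
  have hdenh : HasDerivAt (fun t => κ t ^ 2 * τ t) (2 * k * k' * b + k ^ 2 * b') t₀ := by
    have h1 : HasDerivAt (fun t => κ t ^ 2) (2 * k * k') t₀ := by
      have := hκh.pow 2
      rw [show (κ ^ 2 : ℝ → ℝ) = fun t => κ t ^ 2 from rfl] at this
      exact this.congr_deriv (by rw [hkdef]; norm_num)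
    exact (h1.mul hτh).congr_deriv (by rw [hkdef, hbdef])
  set G := (k'' * (k ^ 2 * b) - k' * (2 * k * k' * b + k ^ 2 * b')) / (k ^ 2 * b) ^ 2 with hGdef
  have hg : HasDerivAt (fun t => deriv κ t / (κ t ^ 2 * τ t)) G t₀ := hκ'h.div hdenh hden
  have hcfun : c = fun t => γ t + (1 / κ t) • N t - (deriv κ t / (κ t ^ 2 * τ t)) • B t :=
    funext hc
  have hch : HasDerivAt c
      (T t₀ + ((1 / k) • deriv N t₀ + (-k' / k ^ 2) • N t₀)
        - ((k' / (k ^ 2 * b)) • deriv B t₀ + G • B t₀)) t₀ := by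
    rw [hcfun]
    exact (hγh.add (hf.smul hNh)).sub (hg.smul hBh)
  have hderiv : deriv c t₀ = (b / k - G) • B t₀ := by
    rw [hch.deriv, hFr2, hFr3]
    have e1 : (1 : ℝ) + (1 / k) * (-k) = 0 := by field_simp; ring
    have e2 : (-k' / k ^ 2) + (k' / (k ^ 2 * b)) * b = 0 := by field_simp; ring
    have e3 : (1 / k) * b = b / k := by ring
    have heq : T t₀ + ((1 / k) • ((-k) • T t₀ + b • B t₀) + (-k' / k ^ 2) • N t₀)
        - ((k' / (k ^ 2 * b)) • ((-b) • N t₀) + G • B t₀)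
        = ((1 : ℝ) + (1 / k) * (-k)) • T t₀
          + ((-k' / k ^ 2) + (k' / (k ^ 2 * b)) * b) • N t₀
          + ((1 / k) * b - G) • B t₀ := by
      module
    rw [heq, e1, e2, e3]
    simp
  have hB0 : B t₀ ≠ 0 := by
    have hT2 : ⟪T t₀, T t₀⟫ = 1 := by
      rw [real_inner_self_eq_norm_sq, hunit]; norm_num
    have hN2 : ⟪N t₀, N t₀⟫ = 1 := by
      rw [real_inner_self_eq_norm_sq, hNunit]; norm_num
    have hTN' := hTN t₀
    simp only [PiLp.inner_apply, RCLike.inner_apply, conj_trivial,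
      Fin.sum_univ_three] at hT2 hN2 hTN'
    have hc0 : B t₀ 0 = T t₀ 1 * N t₀ 2 - T t₀ 2 * N t₀ 1 := by rw [hBdef]; rfl
    have hc1 : B t₀ 1 = T t₀ 2 * N t₀ 0 - T t₀ 0 * N t₀ 2 := by rw [hBdef]; rfl
    have hc2 : B t₀ 2 = T t₀ 0 * N t₀ 1 - T t₀ 1 * N t₀ 0 := by rw [hBdef]; rfl
    have hBB : ⟪B t₀, B t₀⟫ = 1 := by
      simp only [PiLp.inner_apply, RCLike.inner_apply, conj_trivial, Fin.sum_univ_three,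
        hc0, hc1, hc2]
      linear_combination (N t₀ 0 * N t₀ 0 + N t₀ 1 * N t₀ 1 + N t₀ 2 * N t₀ 2) * hT2 + hN2
        - (T t₀ 0 * N t₀ 0 + T t₀ 1 * N t₀ 1 + T t₀ 2 * N t₀ 2) * hTN'
    intro h
    rw [h, inner_zero_left] at hBB
    norm_num at hBB
  have hit : iteratedDeriv 2 κ t₀ = k'' := by
    simp [iteratedDeriv_succ, iteratedDeriv_one]
    rfl
  rw [hderiv, smul_eq_zero, or_iff_left hB0, hit, sub_eq_zero, hGdef,
    div_eq_div_iff hk0' (pow_ne_zero 2 hden)]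
  constructor
  · intro h
    have hP : k'' * (k * b) = 2 * k' ^ 2 * b + k' * b' * k + k ^ 2 * b ^ 3 := by
      apply mul_left_cancel₀ (show (k ^ 2 : ℝ) ≠ 0 from pow_ne_zero 2 hk0')
      linear_combination -h
    have hkb : (k * b : ℝ) ≠ 0 := mul_ne_zero hk0' ht0
    have h2 : k'' = (2 * k' ^ 2 * b + k' * b' * k + k ^ 2 * b ^ 3) / (k * b) := by
      rw [eq_div_iff hkb]; exact hP
    rw [h2]
    field_simp
  · intro h
    rw [h]
    field_simp
    ring
end
end

section
/- Let γ be a smooth unit-speed space curve with κ(t₀) > 0 and τ(t₀) ≠ 0, let d(t) = ½‖γ(t) − a‖² be the distance squared function, and let c_γ = γ + μ₁N + μ₂B with μ₁ = 1/κ and μ₂ = −κ'/(κ²τ). Then, with a = c_γ(t₀), d''''(t₀) = 0 if and only if μ₂'(t₀) + μ₁(t₀)τ(t₀) = 0; that is, d has an A₄-singularity at t₀ if and only if c_γ'(t₀) = 0, i.e. if and only if γ has a vertex at t₀. -/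
noncomputable section
open scoped RealInnerProductSpace
open Filter Asymptotics

lemma iteratedDeriv_four (f : ℝ → ℝ) :
    iteratedDeriv 4 f = deriv (deriv (deriv (deriv f))) := by
  rw [show (4 : ℕ) = 3 + 1 from rfl, iteratedDeriv_succ,
    show (3 : ℕ) = 2 + 1 from rfl, iteratedDeriv_succ,
    show (2 : ℕ) = 1 + 1 from rfl, iteratedDeriv_succ, iteratedDeriv_one]

lemma cross3_inner_left (u v : E3) : ⟪cross3 u v, u⟫ = 0 := by
  simp [cross3, mk3, PiLp.inner_apply, Fin.sum_univ_three]; ring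

lemma cross3_inner_right (u v : E3) : ⟪cross3 u v, v⟫ = 0 := by
  simp [cross3, mk3, PiLp.inner_apply, Fin.sum_univ_three]; ring

lemma cross3_inner_self (u v : E3) :
    ⟪cross3 u v, cross3 u v⟫ = ⟪u,u⟫ * ⟪v,v⟫ - ⟪u,v⟫ ^ 2 := by
  rw [PiLp.inner_apply, PiLp.inner_apply, PiLp.inner_apply, PiLp.inner_apply]
  simp [cross3, mk3, PiLp.inner_apply, Fin.sum_univ_three]; ring

/-- With a = c_γ(t₀) the center of the osculating sphere, the distance
squared function d(t) = ½‖γ(t) − a‖² has d''''(t₀) = 0 iff μ₂'(t₀) + μ₁(t₀)τ(t₀) = 0,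
i.e. iff γ has a vertex at t₀ (c_γ'(t₀) = 0). -/
theorem dist_sq_A4_iff_vertex
    (γ T N B c : ℝ → E3) (κ τ : ℝ → ℝ) (t₀ : ℝ)
    (hγ : ContDiff ℝ (⊤ : ℕ∞) γ) (hTs : ContDiff ℝ (⊤ : ℕ∞) T) (hNs : ContDiff ℝ (⊤ : ℕ∞) N)
    (hBs : ContDiff ℝ (⊤ : ℕ∞) B) (hκs : ContDiff ℝ (⊤ : ℕ∞) κ) (hτs : ContDiff ℝ (⊤ : ℕ∞) τ)
    (hTdef : ∀ t, T t = deriv γ t)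
    (hunit : ∀ t, ‖T t‖ = 1) (hNunit : ∀ t, ‖N t‖ = 1)
    (hBdef : ∀ t, B t = cross3 (T t) (N t))
    (hTN : ∀ t, ⟪T t, N t⟫ = 0)
    (hκτ : ∀ᶠ t in nhds t₀, 0 < κ t ∧ τ t ≠ 0)
    (hFr1 : ∀ t, deriv T t = κ t • N t)
    (hFr2 : ∀ t, deriv N t = (-(κ t)) • T t + τ t • B t)
    (hFr3 : ∀ t, deriv B t = (-(τ t)) • N t)
    (hc : ∀ t, c t = γ t + (1 / κ t) • N t + (-(deriv κ t) / (κ t ^ 2 * τ t)) • B t) :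
    iteratedDeriv 4 (fun t => (1 / 2) * ‖γ t - c t₀‖ ^ 2) t₀ = 0 ↔
      deriv (fun t => -(deriv κ t) / (κ t ^ 2 * τ t)) t₀ + (1 / κ t₀) * τ t₀ = 0 := by
  obtain ⟨hκpos, hτne⟩ := hκτ.self_of_nhds
  have hκne : κ t₀ ≠ 0 := hκpos.ne'
  set a : E3 := c t₀ with ha
  -- frame inner products
  have hTT : ∀ t, ⟪T t, T t⟫ = 1 := fun t => by
    rw [real_inner_self_eq_norm_sq, hunit]; norm_num
  have hNN : ∀ t, ⟪N t, N t⟫ = 1 := fun t => by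
    rw [real_inner_self_eq_norm_sq, hNunit]; norm_num
  have hBT : ∀ t, ⟪B t, T t⟫ = 0 := fun t => by rw [hBdef]; exact cross3_inner_left _ _
  have hBN : ∀ t, ⟪B t, N t⟫ = 0 := fun t => by rw [hBdef]; exact cross3_inner_right _ _
  have hBB : ∀ t, ⟪B t, B t⟫ = 1 := fun t => by
    rw [hBdef, cross3_inner_self, hTT, hNN, hTN]; norm_num
  have hNT : ∀ t, ⟪N t, T t⟫ = 0 := fun t => by rw [real_inner_comm]; exact hTN t
  have hTB : ∀ t, ⟪T t, B t⟫ = 0 := fun t => by rw [real_inner_comm]; exact hBT t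
  have hNB : ∀ t, ⟪N t, B t⟫ = 0 := fun t => by rw [real_inner_comm]; exact hBN t
  -- derivative facts
  have hκd : Differentiable ℝ κ := hκs.differentiable (by simp)
  have hτd : Differentiable ℝ τ := hτs.differentiable (by simp)
  have hκ'd : Differentiable ℝ (deriv κ) :=
    ((contDiff_infty_iff_deriv.mp (hκs.of_le (by simp))).2).differentiable (by simp)
  have hγD : ∀ t, HasDerivAt γ (T t) t := fun t => by
    rw [hTdef]; exact ((hγ.differentiable (by simp)) t).hasDerivAt
  have hTD : ∀ t, HasDerivAt T (κ t • N t) t := fun t => by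
    rw [← hFr1]; exact ((hTs.differentiable (by simp)) t).hasDerivAt
  have hND : ∀ t, HasDerivAt N ((-(κ t)) • T t + τ t • B t) t := fun t => by
    rw [← hFr2]; exact ((hNs.differentiable (by simp)) t).hasDerivAt
  have hBD : ∀ t, HasDerivAt B ((-(τ t)) • N t) t := fun t => by
    rw [← hFr3]; exact ((hBs.differentiable (by simp)) t).hasDerivAt
  set F : ℝ → E3 := fun t => γ t - a with hF
  have hFD : ∀ t, HasDerivAt F (T t) t := fun t => (hγD t).sub_const a
  set f : ℝ → ℝ := fun t => ⟪F t, T t⟫ with hfdef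
  set g : ℝ → ℝ := fun t => ⟪F t, N t⟫ with hgdef
  set h : ℝ → ℝ := fun t => ⟪F t, B t⟫ with hhdef
  have hf' : ∀ t, HasDerivAt f (1 + κ t * g t) t := fun t => by
    have := (hFD t).inner ℝ (hTD t)
    rw [real_inner_smul_right, hTT] at this
    simpa [hfdef, hgdef, add_comm] using this
  have hg' : ∀ t, HasDerivAt g (-(κ t) * f t + τ t * h t) t := fun t => by
    have := (hFD t).inner ℝ (hND t)
    rw [inner_add_right, real_inner_smul_right, real_inner_smul_right, hTN] at this
    simpa [hfdef, hgdef, hhdef] using this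
  have hh' : ∀ t, HasDerivAt h (-(τ t) * g t) t := fun t => by
    have := (hFD t).inner ℝ (hBD t)
    rw [real_inner_smul_right, hTB] at this
    simpa [hgdef, hhdef] using this
  -- values at t₀
  have hF0 : F t₀ = -((1 / κ t₀) • N t₀) - (-(deriv κ t₀) / (κ t₀ ^ 2 * τ t₀)) • B t₀ := by
    simp only [hF, ha, hc t₀]
    module
  have hf0 : f t₀ = 0 := by
    show ⟪F t₀, T t₀⟫ = 0
    rw [hF0, inner_sub_left, inner_neg_left, real_inner_smul_left, real_inner_smul_left,
      hNT, hBT]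
    ring
  have hg0 : g t₀ = -(1 / κ t₀) := by
    show ⟪F t₀, N t₀⟫ = -(1 / κ t₀)
    rw [hF0, inner_sub_left, inner_neg_left, real_inner_smul_left, real_inner_smul_left,
      hNN, hBN]
    ring
  have hh0 : h t₀ = deriv κ t₀ / (κ t₀ ^ 2 * τ t₀) := by
    show ⟪F t₀, B t₀⟫ = deriv κ t₀ / (κ t₀ ^ 2 * τ t₀)
    rw [hF0, inner_sub_left, inner_neg_left, real_inner_smul_left, real_inner_smul_left,
      hNB, hBB]
    ring
  -- the successive derivatives, as function equalities
  have hd1 : deriv (fun t => (1 / 2) * ‖γ t - a‖ ^ 2) = f := by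
    funext t
    have heq : (fun t => (1 / 2 : ℝ) * ‖γ t - a‖ ^ 2) = fun t => (1 / 2) * ⟪F t, F t⟫ := by
      funext s; rw [real_inner_self_eq_norm_sq]
    rw [heq]
    have := ((hFD t).inner ℝ (hFD t)).const_mul (1 / 2 : ℝ)
    have h2 : (1 / 2 : ℝ) * (⟪F t, T t⟫ + ⟪T t, F t⟫) = f t := by
      have hcm : ⟪T t, F t⟫ = ⟪F t, T t⟫ := real_inner_comm _ _
      rw [hcm]
      show (1 / 2 : ℝ) * (⟪F t, T t⟫ + ⟪F t, T t⟫) = ⟪F t, T t⟫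
      ring
    rw [h2] at this
    exact this.deriv
  have hd2 : deriv f = fun t => 1 + κ t * g t := funext fun t => (hf' t).deriv
  have hd3 : deriv (fun t => 1 + κ t * g t)
      = fun t => deriv κ t * g t + κ t * (-(κ t) * f t + τ t * h t) := by
    funext t
    exact (((hκd t).hasDerivAt.mul (hg' t)).const_add 1).deriv
  -- fourth derivative at t₀
  have hκAt : HasDerivAt κ (deriv κ t₀) t₀ := (hκd t₀).hasDerivAt
  have hτAt : HasDerivAt τ (deriv τ t₀) t₀ := (hτd t₀).hasDerivAt
  have hκ'At : HasDerivAt (deriv κ) (deriv (deriv κ) t₀) t₀ := (hκ'd t₀).hasDerivAt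
  have hd4 : HasDerivAt (fun t => deriv κ t * g t + κ t * (-(κ t) * f t + τ t * h t))
      ((deriv (deriv κ) t₀ * g t₀ + deriv κ t₀ * (-(κ t₀) * f t₀ + τ t₀ * h t₀)) +
        (deriv κ t₀ * (-(κ t₀) * f t₀ + τ t₀ * h t₀) +
          κ t₀ * ((-(deriv κ t₀) * f t₀ + -(κ t₀) * (1 + κ t₀ * g t₀)) +
            (deriv τ t₀ * h t₀ + τ t₀ * (-(τ t₀) * g t₀))))) t₀ :=
    (hκ'At.mul (hg' t₀)).add (hκAt.mul (((hκAt.neg.mul (hf' t₀)).add (hτAt.mul (hh' t₀)))))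
  -- denominator derivative for the right-hand side
  have hden : HasDerivAt (fun t => κ t ^ 2 * τ t)
      (((2 : ℕ) * κ t₀ ^ 1 * deriv κ t₀) * τ t₀ + κ t₀ ^ 2 * deriv τ t₀) t₀ :=
    (hκAt.pow 2).mul hτAt
  have hdenne : κ t₀ ^ 2 * τ t₀ ≠ 0 := by positivity
  have hμ : HasDerivAt (fun t => -(deriv κ t) / (κ t ^ 2 * τ t))
      ((-(deriv (deriv κ) t₀) * (κ t₀ ^ 2 * τ t₀) -
        -(deriv κ t₀) * (((2 : ℕ) * κ t₀ ^ 1 * deriv κ t₀) * τ t₀ + κ t₀ ^ 2 * deriv τ t₀)) /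
        (κ t₀ ^ 2 * τ t₀) ^ 2) t₀ := hκ'At.neg.div hden hdenne
  -- assemble
  have hiter : iteratedDeriv 4 (fun t => (1 / 2) * ‖γ t - a‖ ^ 2) t₀
      = deriv (fun t => deriv κ t * g t + κ t * (-(κ t) * f t + τ t * h t)) t₀ := by
    rw [iteratedDeriv_four, hd1, hd2, hd3]
  rw [hiter, hd4.deriv, hμ.deriv, hf0, hg0, hh0]
  have key : (deriv (deriv κ) t₀ * -(1 / κ t₀) + deriv κ t₀ * (-(κ t₀) * 0 + τ t₀ * (deriv κ t₀ / (κ t₀ ^ 2 * τ t₀)))) +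
        (deriv κ t₀ * (-(κ t₀) * 0 + τ t₀ * (deriv κ t₀ / (κ t₀ ^ 2 * τ t₀))) +
          κ t₀ * ((-(deriv κ t₀) * 0 + -(κ t₀) * (1 + κ t₀ * -(1 / κ t₀))) +
            (deriv τ t₀ * (deriv κ t₀ / (κ t₀ ^ 2 * τ t₀)) + τ t₀ * (-(τ t₀) * -(1 / κ t₀)))))
      = (κ t₀ * τ t₀) *
        ((-(deriv (deriv κ) t₀) * (κ t₀ ^ 2 * τ t₀) -
          -(deriv κ t₀) * (((2 : ℕ) * κ t₀ ^ 1 * deriv κ t₀) * τ t₀ + κ t₀ ^ 2 * deriv τ t₀)) /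
          (κ t₀ ^ 2 * τ t₀) ^ 2 + (1 / κ t₀) * τ t₀) := by
    field_simp
    ring
  rw [key, mul_eq_zero]
  have : κ t₀ * τ t₀ ≠ 0 := mul_ne_zero hκne hτne
  simp [this]
end
end

section
/- Let γ₀(t) = (a₂t² + a₃t³ + …, b₃t³ + b₄t⁴ + …, c₃t³ + …) be a space cusp with a₂ ≠ 0 and b₃ ≠ 0, and let γ_s(t) = (a₂t² + a₃t³ + …, s₁t + b̄₂(s)t² + b₃t³ + …, s₂t + c̄₂(s)t² + c₃t³ + …) be the 2-parameter deformation with deformation parameters s = (s₁, s₂), b̄₂(0) = c̄₂(0) = 0. Then the flattening stratum at first order is the line s₂ = (c₃/b₃)s₁: i.e. if det(γ_s'(0), γ_s''(0), γ_s'''(0)) = 0 to first order in s, then b₃s₂ − c₃s₁ = 0. Concretely: det evaluated at (t,s) = (0,s) equals 12a₂(b₃s₂ − c₃s₁) + O(|s|²). -/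
noncomputable section
open scoped RealInnerProductSpace
open Filter Asymptotics

/-- The 2-parameter deformation γ_s of the space cusp
γ₀(t) = (a₂t² + a₃t³, b₃t³ + b₄t⁴, c₃t³ + c₄t⁴). -/
def cuspFam (a₂ a₃ b₃ b₄ c₃ c₄ : ℝ) (s : ℝ × ℝ) : ℝ → E3 := fun t =>
  mk3 (a₂ * t ^ 2 + a₃ * t ^ 3) (s.1 * t + b₃ * t ^ 3 + b₄ * t ^ 4)
    (s.2 * t + c₃ * t ^ 3 + c₄ * t ^ 4)

/-! The coordinates of `γ_s` are polynomials, so `γ_s⁽ᵏ⁾(0) = k! • (k-th coefficients)`: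
`γ_s'(0) = (0, s₁, s₂)`, `γ_s''(0) = (2a₂, 0, 0)` and `γ_s'''(0) = (6a₃, 6b₃, 6c₃)`. Expanding the
determinant along the middle vector gives `2a₂ · (6b₃s₂ − 6c₃s₁)`. -/

open Polynomial

lemma mk3_decomp (x y z : ℝ) : mk3 x y z = x • mk3 1 0 0 + y • mk3 0 1 0 + z • mk3 0 0 1 := by
  ext i; fin_cases i <;> simp [mk3]

lemma hasDerivAt_mk3 {f g h : ℝ → ℝ} {f' g' h' t : ℝ} (hf : HasDerivAt f f' t)
    (hg : HasDerivAt g g' t) (hh : HasDerivAt h h' t) :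
    HasDerivAt (fun t => mk3 (f t) (g t) (h t)) (mk3 f' g' h') t := by
  rw [funext fun t => mk3_decomp (f t) (g t) (h t), mk3_decomp f' g' h']
  exact ((hf.smul_const _).add (hg.smul_const _)).add (hh.smul_const _)

theorem iteratedDeriv_mk3_eval (p q r : ℝ[X]) (k : ℕ) :
    iteratedDeriv k (fun t => mk3 (p.eval t) (q.eval t) (r.eval t)) = fun t =>
      mk3 ((derivative^[k] p).eval t) ((derivative^[k] q).eval t) ((derivative^[k] r).eval t) := by
  induction k with
  | zero => simp
  | succ k ih =>
    rw [iteratedDeriv_succ, ih]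
    funext t
    simp only [Function.iterate_succ_apply']
    exact (hasDerivAt_mk3 ((derivative^[k] p).hasDerivAt t) ((derivative^[k] q).hasDerivAt t)
      ((derivative^[k] r).hasDerivAt t)).deriv

theorem Polynomial.eval_zero_iterate_derivative {R : Type*} [CommSemiring R] (p : R[X]) (k : ℕ) :
    (derivative^[k] p).eval 0 = k.factorial * p.coeff k := by
  rw [← coeff_zero_eq_eval_zero, coeff_iterate_derivative, zero_add, Nat.descFactorial_self,
    nsmul_eq_mul]

theorem iteratedDeriv_mk3_eval_zero (p q r : ℝ[X]) (k : ℕ) :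
    iteratedDeriv k (fun t => mk3 (p.eval t) (q.eval t) (r.eval t)) 0 =
      mk3 (k.factorial * p.coeff k) (k.factorial * q.coeff k) (k.factorial * r.coeff k) := by
  simp only [iteratedDeriv_mk3_eval, eval_zero_iterate_derivative]

lemma det3_mk3 (x y z x' y' z' x'' y'' z'' : ℝ) :
    det3 (mk3 x y z) (mk3 x' y' z') (mk3 x'' y'' z'') =
      x * (y' * z'' - z' * y'') - y * (x' * z'' - z' * x'') + z * (x' * y'' - y' * x'') := by
  simp [det3, mk3]

lemma cuspFam_eq_eval (a₂ a₃ b₃ b₄ c₃ c₄ : ℝ) (s : ℝ × ℝ) :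
    cuspFam a₂ a₃ b₃ b₄ c₃ c₄ s = fun t =>
      mk3 ((C a₂ * X ^ 2 + C a₃ * X ^ 3).eval t) ((C s.1 * X + C b₃ * X ^ 3 + C b₄ * X ^ 4).eval t)
        ((C s.2 * X + C c₃ * X ^ 3 + C c₄ * X ^ 4).eval t) := by
  funext t
  simp [cuspFam]

theorem det3_cuspFam_derivs (a₂ a₃ b₃ b₄ c₃ c₄ : ℝ) (s : ℝ × ℝ) :
    det3 (deriv (cuspFam a₂ a₃ b₃ b₄ c₃ c₄ s) 0)
        (iteratedDeriv 2 (cuspFam a₂ a₃ b₃ b₄ c₃ c₄ s) 0)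
        (iteratedDeriv 3 (cuspFam a₂ a₃ b₃ b₄ c₃ c₄ s) 0) =
      12 * a₂ * (b₃ * s.2 - c₃ * s.1) := by
  simp only [← iteratedDeriv_one, cuspFam_eq_eval, iteratedDeriv_mk3_eval_zero, det3_mk3]
  simp [coeff_X_pow, Nat.factorial]
  ring

theorem flattening_stratum_of_cusp_family_general
    (a₂ a₃ b₃ b₄ c₃ c₄ : ℝ) (ha₂ : a₂ ≠ 0) :
    ∀ s : ℝ × ℝ,
      det3 (deriv (cuspFam a₂ a₃ b₃ b₄ c₃ c₄ s) 0)
          (iteratedDeriv 2 (cuspFam a₂ a₃ b₃ b₄ c₃ c₄ s) 0)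
          (iteratedDeriv 3 (cuspFam a₂ a₃ b₃ b₄ c₃ c₄ s) 0) =
        12 * a₂ * (b₃ * s.2 - c₃ * s.1) ∧
      (det3 (deriv (cuspFam a₂ a₃ b₃ b₄ c₃ c₄ s) 0)
          (iteratedDeriv 2 (cuspFam a₂ a₃ b₃ b₄ c₃ c₄ s) 0)
          (iteratedDeriv 3 (cuspFam a₂ a₃ b₃ b₄ c₃ c₄ s) 0) = 0 ↔
        b₃ * s.2 - c₃ * s.1 = 0) := by
  intro s
  rw [det3_cuspFam_derivs]
  exact ⟨rfl, by simp [ha₂]⟩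

/-- For the family γ_s above (a₂ ≠ 0, b₃ ≠ 0),
det(γ_s'(0), γ_s''(0), γ_s'''(0)) = 12a₂(b₃s₂ − c₃s₁); in particular it vanishes iff
b₃s₂ − c₃s₁ = 0, so the flattening stratum at first order is the line s₂ = (c₃/b₃)s₁. -/
theorem flattening_stratum_of_cusp_family
    (a₂ a₃ b₃ b₄ c₃ c₄ : ℝ) (ha₂ : a₂ ≠ 0) (hb₃ : b₃ ≠ 0) :
    ∀ s : ℝ × ℝ,
      det3 (deriv (cuspFam a₂ a₃ b₃ b₄ c₃ c₄ s) 0)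
          (iteratedDeriv 2 (cuspFam a₂ a₃ b₃ b₄ c₃ c₄ s) 0)
          (iteratedDeriv 3 (cuspFam a₂ a₃ b₃ b₄ c₃ c₄ s) 0) =
        12 * a₂ * (b₃ * s.2 - c₃ * s.1) ∧
      (det3 (deriv (cuspFam a₂ a₃ b₃ b₄ c₃ c₄ s) 0)
          (iteratedDeriv 2 (cuspFam a₂ a₃ b₃ b₄ c₃ c₄ s) 0)
          (iteratedDeriv 3 (cuspFam a₂ a₃ b₃ b₄ c₃ c₄ s) 0) = 0 ↔
        b₃ * s.2 - c₃ * s.1 = 0) :=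
  flattening_stratum_of_cusp_family_general a₂ a₃ b₃ b₄ c₃ c₄ ha₂
end
end
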